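/- arXiv:2505.17594 — 6 statements merged into one kernel-verified Lean document; each statement's English description precedes it below -/
import Mathlib

section
/- The function x ↦ μ(x) = -min_{‖d‖≤1} max_{i=1,…,q} ∇f_i(x)ᵀd is continuous on R^n. -/
/-!
Perturbing every gradient `g i` by at most `ε` moves each `⟪g i, d⟫` with `‖d‖ ≤ 1` by at most
`ε`, hence moves the maximum over `i` and then the infimum over `d` by at most `ε`. So `μ` is a
`1`-Lipschitz function of the family of gradients, and that family depends continuously on `x`.
-/

open scoped RealInnerProductSpace

/-- `max_{i} ⟪g i, d⟫` for a family of gradients `g`. -/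
noncomputable def maxG {n q : ℕ} (hq : 0 < q) (g : Fin q → EuclideanSpace ℝ (Fin n))
    (d : EuclideanSpace ℝ (Fin n)) : ℝ :=
  Finset.univ.sup' (Finset.univ_nonempty_iff.mpr (Fin.pos_iff_nonempty.mp hq))
    (fun i => ⟪g i, d⟫)

/-- The criticality measure `μ(x) = -min_{‖d‖ ≤ 1} max_i ⟪∇f_i(x), d⟫`. -/
noncomputable def mu {n q : ℕ} (hq : 0 < q) (g : Fin q → EuclideanSpace ℝ (Fin n)) : ℝ :=
  - sInf ((maxG hq g) '' Metric.closedBall 0 1)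

theorem ContDiff.continuous_gradient {𝕜 F : Type*} [RCLike 𝕜] [NormedAddCommGroup F]
    [InnerProductSpace 𝕜 F] [CompleteSpace F] {f : F → 𝕜} (hf : ContDiff 𝕜 1 f) :
    Continuous (gradient f) :=
  (InnerProductSpace.toDual 𝕜 F).symm.continuous.comp (hf.continuous_fderiv one_ne_zero)

section

variable {n q : ℕ} (hq : 0 < q)

theorem inner_le_maxG (g : Fin q → EuclideanSpace ℝ (Fin n)) (d : EuclideanSpace ℝ (Fin n))
    (i : Fin q) : ⟪g i, d⟫ ≤ maxG hq g d :=
  Finset.le_sup' (fun j => ⟪g j, d⟫) (Finset.mem_univ i)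

theorem neg_norm_le_maxG (g : Fin q → EuclideanSpace ℝ (Fin n)) {d : EuclideanSpace ℝ (Fin n)}
    (hd : ‖d‖ ≤ 1) (i : Fin q) : -‖g i‖ ≤ maxG hq g d :=
  calc -‖g i‖ ≤ -(‖g i‖ * ‖d‖) := by
        gcongr
        exact mul_le_of_le_one_right (norm_nonneg _) hd
    _ ≤ ⟪g i, d⟫ := neg_le_of_abs_le (abs_real_inner_le_norm _ _)
    _ ≤ maxG hq g d := inner_le_maxG hq g d i

theorem bddBelow_maxG_image_closedBall (g : Fin q → EuclideanSpace ℝ (Fin n)) :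
    BddBelow (maxG hq g '' Metric.closedBall 0 1) := by
  refine ⟨-‖g ⟨0, hq⟩‖, ?_⟩
  rintro _ ⟨d, hd, rfl⟩
  exact neg_norm_le_maxG hq g (mem_closedBall_zero_iff.mp hd) _

theorem maxG_le_maxG_add_dist (g g' : Fin q → EuclideanSpace ℝ (Fin n))
    {d : EuclideanSpace ℝ (Fin n)} (hd : ‖d‖ ≤ 1) :
    maxG hq g d ≤ maxG hq g' d + dist g g' := by
  refine Finset.sup'_le _ _ fun i _ => ?_
  have hgi : ‖g i - g' i‖ ≤ dist g g' := by
    rw [← dist_eq_norm]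
    exact dist_le_pi_dist g g' i
  calc ⟪g i, d⟫ = ⟪g' i, d⟫ + ⟪g i - g' i, d⟫ := by rw [inner_sub_left]; ring
    _ ≤ maxG hq g' d + ‖g i - g' i‖ * ‖d‖ :=
        add_le_add (inner_le_maxG hq g' d i) (real_inner_le_norm _ _)
    _ ≤ maxG hq g' d + dist g g' := by
        gcongr
        exact (mul_le_of_le_one_right (norm_nonneg _) hd).trans hgi

theorem mu_le_mu_add_dist (g g' : Fin q → EuclideanSpace ℝ (Fin n)) :
    mu hq g ≤ mu hq g' + dist g g' := by
  have hball : (Metric.closedBall (0 : EuclideanSpace ℝ (Fin n)) 1).Nonempty :=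
    Metric.nonempty_closedBall.mpr zero_le_one
  have hInf : sInf (maxG hq g' '' Metric.closedBall 0 1) - dist g g' ≤
      sInf (maxG hq g '' Metric.closedBall 0 1) := by
    refine le_csInf (hball.image _) ?_
    rintro _ ⟨d, hd, rfl⟩
    have hInf_le := csInf_le (bddBelow_maxG_image_closedBall hq g') ⟨d, hd, rfl⟩
    have hmax := maxG_le_maxG_add_dist hq g' g (mem_closedBall_zero_iff.mp hd)
    rw [dist_comm] at hmax
    linarith
  unfold mu
  linarith

theorem lipschitzWith_mu : LipschitzWith 1 (mu (n := n) hq) :=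
  LipschitzWith.of_le_add (mu_le_mu_add_dist hq)

end

/-- The criticality measure `x ↦ μ(x)` is continuous. -/
theorem stmt6 {n q : ℕ} (hq : 0 < q) (f : Fin q → EuclideanSpace ℝ (Fin n) → ℝ)
    (hf : ∀ i, ContDiff ℝ 1 (f i)) :
    Continuous (fun x => mu hq (fun i => gradient (f i) x)) :=
  (lipschitzWith_mu hq).continuous.comp (continuous_pi fun i => (hf i).continuous_gradient)
end

section
/- Suppose f : R^n → R has an L-Lipschitz continuous gradient, and y, d ∈ R^n with ‖d‖ = 1, and α > 0, δ ∈ (0,1), γ > 0 satisfy f(y + (α/δ)d) ≥ f(y + αd) − γ(α/δ)². Then −∇f(y)ᵀd ≤ α·(1+δ)/(δ(1−δ))·(L + γ). -/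
open scoped RealInnerProductSpace

/-! By the descent lemma, `t ↦ f (y + t • d)` lies within `(L/2) t²` of its tangent line at `0`,
whose slope is `s = ⟪∇f y, d⟫`. The upper bound at `β = α/δ`, the lower bound at `α` and the failed
expansion step give `(β - α)(-s) ≤ (L/2)(α² + β²) + γβ²`; since `β - α = β(1 - δ)`, dividing by
`β(1 - δ)` leaves `-s ≤ β ((L/2)(1 + δ²) + γ) / (1 - δ)`, which is at most the claimed bound. -/

section LipschitzGradient

variable {E : Type*} [NormedAddCommGroup E] [InnerProductSpace ℝ E] [CompleteSpace E]

theorem HasGradientAt.hasDerivAt_comp_add_smul {f : E → ℝ} {f' x v : E} {t : ℝ}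
    (hf : HasGradientAt f f' (x + t • v)) :
    HasDerivAt (fun s : ℝ => f (x + s • v)) ⟪f', v⟫ t := by
  have hline : HasDerivAt (fun s : ℝ => x + s • v) v t := by
    simpa using ((hasDerivAt_id t).smul_const v).const_add x
  have := hf.hasFDerivAt.comp_hasDerivAt t hline
  rwa [InnerProductSpace.toDual_apply_apply] at this

theorem abs_sub_sub_inner_gradient_le {f : E → ℝ} (hf : Differentiable ℝ f) {L : ℝ}
    (hlip : ∀ a b, ‖gradient f a - gradient f b‖ ≤ L * ‖a - b‖) (x v : E) :
    |f (x + v) - f x - ⟪gradient f x, v⟫| ≤ L / 2 * ‖v‖ ^ 2 := by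
  set φ : ℝ → ℝ := fun t => f (x + t • v) - f x - t * ⟪gradient f x, v⟫
  have hφ' : ∀ t, HasDerivAt φ ⟪gradient f (x + t • v) - gradient f x, v⟫ t := fun t => by
    rw [inner_sub_left]
    exact (((hf _).hasGradientAt.hasDerivAt_comp_add_smul).sub_const _).sub
      ((hasDerivAt_id t).mul_const _ |>.congr_deriv (one_mul _))
  have hB : ∀ t, HasDerivAt (fun t => L / 2 * ‖v‖ ^ 2 * t ^ 2) (L * ‖v‖ ^ 2 * t) t := fun t =>
    ((hasDerivAt_pow 2 t).const_mul _).congr_deriv (by push_cast; ring)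
  have hbound : ∀ t ∈ Set.Ico (0 : ℝ) 1,
      ‖⟪gradient f (x + t • v) - gradient f x, v⟫‖ ≤ L * ‖v‖ ^ 2 * t := fun t ht => by
    calc ‖⟪gradient f (x + t • v) - gradient f x, v⟫‖
        ≤ ‖gradient f (x + t • v) - gradient f x‖ * ‖v‖ := norm_inner_le_norm _ _
      _ ≤ L * ‖x + t • v - x‖ * ‖v‖ := by gcongr; exact hlip _ _
      _ = L * ‖v‖ ^ 2 * t := by
        rw [add_sub_cancel_left, norm_smul, Real.norm_of_nonneg ht.1]; ring
  have := image_norm_le_of_norm_deriv_right_le_deriv_boundary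
    (fun t _ => (hφ' t).continuousAt.continuousWithinAt) (fun t _ => (hφ' t).hasDerivWithinAt)
    (by simp [φ]) hB hbound (Set.right_mem_Icc.2 zero_le_one)
  simpa [φ] using this

end LipschitzGradient

theorem neg_slope_le_of_expansion_fail {φ : ℝ → ℝ} {s L γ α δ : ℝ} (hL : 0 ≤ L) (hγ : 0 ≤ γ)
    (hα : 0 < α) (hδ : δ ∈ Set.Ioo (0 : ℝ) 1)
    (hφ : ∀ t, |φ t - φ 0 - t * s| ≤ L / 2 * t ^ 2)
    (hfail : φ (α / δ) ≥ φ α - γ * (α / δ) ^ 2) :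
    -s ≤ α * (1 + δ) / (δ * (1 - δ)) * (L + γ) := by
  obtain ⟨hδ0, hδ1⟩ := hδ
  have hδ1' : 0 < 1 - δ := sub_pos.2 hδ1
  set β := α / δ with hβ
  have hβ0 : 0 < β := by positivity
  have hαβ : α = δ * β := by rw [hβ]; field_simp
  have hupper := (abs_le.1 (hφ β)).2
  have hlower := (abs_le.1 (hφ α)).1
  have hstep : β * ((1 - δ) * -s) ≤ β * (β * (L / 2 * (1 + δ ^ 2) + γ)) := by
    have h : (β - α) * -s ≤ L / 2 * (α ^ 2 + β ^ 2) + γ * β ^ 2 := by linarith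
    rw [hαβ] at h
    linear_combination h
  have hcoef : L / 2 * (1 + δ ^ 2) + γ ≤ (1 + δ) * (L + γ) := by
    nlinarith [mul_nonneg hL (mul_pos hδ0 hδ1').le, mul_nonneg hγ hδ0.le]
  rw [show α * (1 + δ) / (δ * (1 - δ)) * (L + γ) = β * ((1 + δ) * (L + γ)) / (1 - δ) by
    rw [hαβ]; field_simp, le_div_iff₀ hδ1']
  calc -s * (1 - δ) ≤ β * (L / 2 * (1 + δ ^ 2) + γ) := by
        linarith [le_of_mul_le_mul_left hstep hβ0]
    _ ≤ β * ((1 + δ) * (L + γ)) := by gcongr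

/-- If `f` has `L`-Lipschitz gradient, `‖d‖ = 1`, `α > 0`, `δ ∈ (0,1)`, `γ > 0` and the
expansion step fails: `f(y + (α/δ)d) ≥ f(y + αd) - γ(α/δ)²`, then
`-⟪∇f(y), d⟫ ≤ α·(1+δ)/(δ(1-δ))·(L + γ)`. -/
theorem stmt9 {n : ℕ} (f : EuclideanSpace ℝ (Fin n) → ℝ) (hf : Differentiable ℝ f)
    (L : ℝ) (hL : 0 < L)
    (hlip : ∀ a b : EuclideanSpace ℝ (Fin n), ‖gradient f a - gradient f b‖ ≤ L * ‖a - b‖)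
    (y d : EuclideanSpace ℝ (Fin n)) (hd : ‖d‖ = 1) (α δ γ : ℝ)
    (hα : 0 < α) (hδ : δ ∈ Set.Ioo (0 : ℝ) 1) (hγ : 0 < γ)
    (hfail : f (y + (α / δ) • d) ≥ f (y + α • d) - γ * (α / δ) ^ 2) :
    -⟪gradient f y, d⟫ ≤ α * (1 + δ) / (δ * (1 - δ)) * (L + γ) := by
  refine neg_slope_le_of_expansion_fail (φ := fun t => f (y + t • d)) hL.le hγ.le hα hδ
    (fun t => ?_) hfail
  simpa only [zero_smul, add_zero, real_inner_smul_right, norm_smul, hd, mul_one, Real.norm_eq_abs,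
    sq_abs] using abs_sub_sub_inner_gradient_le hf hlip y (t • d)
end

section
/- Let A be a finite subset of R^q, ρ ∈ R^q, ν > 0, and y ∈ R^q be such that y_i + ν ≤ ρ_i for all i, and for every a ∈ A there exists an index ℓ with y_ℓ + ν ≤ a_ℓ (i.e., y is not within ν of being dominated: y is not componentwise > a − ν·1 for any a ∈ A). Then HI(A ∪ {y}) − HI(A) ≥ ν^q, where HI(S) = vol(⋃_{a∈S}[a,ρ]). -/
/-!
The half-open cube `[y, y + ν)` has volume `ν ^ q` and lies in `[y, ρ]`. Every `a ∈ A` satisfies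
`y ℓ + ν ≤ a ℓ` in some coordinate `ℓ`, so the cube misses every box `[a, ρ]`; hence it lies in
the region added by `y`, whose volume is the difference of the two hypervolumes because the old
region has finite volume.
-/

open MeasureTheory Set

section Boxes

variable {ι : Type*}

theorem volume_pi_Ico_add_const [Fintype ι] {ν : ℝ} (hν : 0 ≤ ν) (y : ι → ℝ) :
    volume (univ.pi fun i => Ico (y i) (y i + ν)) = ENNReal.ofReal (ν ^ Fintype.card ι) := by
  simp [volume_pi_pi, Real.volume_Ico, ← ENNReal.ofReal_pow hν]

theorem pi_Ico_add_const_subset_Icc {ν : ℝ} {y ρ : ι → ℝ} (hyρ : ∀ i, y i + ν ≤ ρ i) :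
    (univ.pi fun i => Ico (y i) (y i + ν)) ⊆ Icc y ρ :=
  fun _ hw => ⟨fun i => (hw i (mem_univ i)).1, fun i => ((hw i (mem_univ i)).2.trans_le (hyρ i)).le⟩

theorem disjoint_pi_Ico_add_const_biUnion_Icc {ν : ℝ} {y ρ : ι → ℝ} {A : Set (ι → ℝ)}
    (hnd : ∀ a ∈ A, ∃ ℓ, y ℓ + ν ≤ a ℓ) :
    Disjoint (univ.pi fun i => Ico (y i) (y i + ν)) (⋃ a ∈ A, Icc a ρ) := by
  refine disjoint_iUnion₂_right.2 fun a ha => disjoint_left.2 fun w hw hwa => ?_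
  obtain ⟨ℓ, hℓ⟩ := hnd a ha
  exact ((hw ℓ (mem_univ ℓ)).2.trans_le hℓ).not_ge (hwa.1 ℓ)

theorem volume_biUnion_Icc_ne_top [Fintype ι] (A : Finset (ι → ℝ)) (ρ : ι → ℝ) :
    volume (⋃ a ∈ A, Icc a ρ) ≠ ⊤ :=
  (measure_biUnion_lt_top A.finite_toSet fun _ _ => measure_Icc_lt_top).ne

end Boxes

/-- Sufficient hypervolume increase: if `y i + ν ≤ ρ i` for all `i` and for every `a ∈ A`
there is an index `ℓ` with `y ℓ + ν ≤ a ℓ`, then `HI(A ∪ {y}) - HI(A) ≥ ν^q`. -/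
theorem stmt12 {q : ℕ} (A : Finset (Fin q → ℝ)) (ρ : Fin q → ℝ) (ν : ℝ) (hν : 0 < ν)
    (y : Fin q → ℝ) (hyρ : ∀ i, y i + ν ≤ ρ i)
    (hnd : ∀ a ∈ A, ∃ ℓ, y ℓ + ν ≤ a ℓ) :
    ENNReal.ofReal (ν ^ q) ≤
      volume (⋃ a ∈ (insert y A : Finset (Fin q → ℝ)), Set.Icc a ρ) -
        volume (⋃ a ∈ A, Set.Icc a ρ) := by
  set cube : Set (Fin q → ℝ) := univ.pi fun i => Ico (y i) (y i + ν)
  have hsub : (⋃ a ∈ A, Icc a ρ) ⊆ ⋃ a ∈ (insert y A : Finset (Fin q → ℝ)), Icc a ρ :=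
    biUnion_subset_biUnion_left (Finset.coe_subset.2 (Finset.subset_insert y A))
  have hcube : cube ⊆ (⋃ a ∈ (insert y A : Finset (Fin q → ℝ)), Icc a ρ) \ ⋃ a ∈ A, Icc a ρ :=
    subset_sdiff.2 ⟨(pi_Ico_add_const_subset_Icc hyρ).trans
        (subset_biUnion_of_mem (u := fun a => Icc a ρ) (Finset.mem_insert_self y A)),
      disjoint_pi_Ico_add_const_biUnion_Icc hnd⟩
  calc ENNReal.ofReal (ν ^ q) = volume cube := by
        rw [volume_pi_Ico_add_const hν.le, Fintype.card_fin]
    _ ≤ _ := measure_mono hcube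
    _ = _ := measure_sdiff hsub
        (A.finite_toSet.measurableSet_biUnion fun _ _ => measurableSet_Icc).nullMeasurableSet
        (volume_biUnion_Icc_ne_top A ρ)
end

section
/- Let A be a finite subset of R^q and ρ ∈ R^q with a < ρ componentwise for all a ∈ A ∪ {y}, with ρ sufficiently large (ρ = f_max + s·1, s large). If HI(A ∪ {y}) − HI(A) > 0, then y is non-dominated by A: for every a ∈ A, it is not the case that a ≤ y (componentwise with a ≠ y), and y ≠ a. Moreover there exists ε > 0 such that for every a ∈ A there is an index ℓ with y_ℓ + ε < a_ℓ. -/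
open MeasureTheory Set Filter Topology

theorem biUnion_insert_Icc_eq_of_le {α : Type*} [Preorder α] [DecidableEq α] {A : Finset α}
    {a y ρ : α} (ha : a ∈ A) (hay : a ≤ y) :
    ⋃ b ∈ insert y A, Icc b ρ = ⋃ b ∈ A, Icc b ρ := by
  rw [Finset.set_biUnion_insert]
  exact union_eq_right.mpr <|
    (Icc_subset_Icc_left hay).trans (Finset.subset_set_biUnion_of_mem (f := (Icc · ρ)) ha)

theorem exists_pos_forall_exists_add_lt {ι : Type*} {A : Finset (ι → ℝ)} {y : ι → ℝ}
    (h : ∀ a ∈ A, ∃ ℓ, y ℓ < a ℓ) : ∃ ε > (0 : ℝ), ∀ a ∈ A, ∃ ℓ, y ℓ + ε < a ℓ := by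
  have hsmall : ∀ a ∈ A, ∀ᶠ ε in 𝓝[>] (0 : ℝ), ∃ ℓ, y ℓ + ε < a ℓ := by
    intro a ha
    obtain ⟨ℓ, hℓ⟩ := h a ha
    filter_upwards [nhdsWithin_le_nhds (eventually_lt_nhds (sub_pos.mpr hℓ))] with ε hε
    exact ⟨ℓ, by linarith⟩
  exact (eventually_mem_nhdsWithin.and ((eventually_all_finset A).mpr hsmall)).exists

theorem stmt13_general {q : ℕ} (A : Finset (Fin q → ℝ)) (ρ y : Fin q → ℝ)
    (hHI : volume (⋃ a ∈ A, Set.Icc a ρ) <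
      volume (⋃ a ∈ (insert y A : Finset (Fin q → ℝ)), Set.Icc a ρ)) :
    (∀ a ∈ A, ¬((∀ i, a i ≤ y i) ∧ a ≠ y)) ∧
      ∃ ε > (0 : ℝ), ∀ a ∈ A, ∃ ℓ, y ℓ + ε < a ℓ := by
  have hnotLE : ∀ a ∈ A, ∃ ℓ, y ℓ < a ℓ := by
    intro a ha
    by_contra! hay
    exact hHI.ne (by rw [biUnion_insert_Icc_eq_of_le ha hay])
  refine ⟨fun a ha ⟨hle, _⟩ => ?_, exists_pos_forall_exists_add_lt hnotLE⟩
  obtain ⟨ℓ, hℓ⟩ := hnotLE a ha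
  exact (hle ℓ).not_gt hℓ

/-- If adding `y` strictly increases the hypervolume, then `y` is non-dominated by every
`a ∈ A`, and moreover there is a uniform `ε > 0` such that for every `a ∈ A` some coordinate
`ℓ` satisfies `y ℓ + ε < a ℓ`. -/
theorem stmt13 {q : ℕ} (A : Finset (Fin q → ℝ)) (ρ y : Fin q → ℝ)
    (hdom : ∀ a ∈ (insert y A : Finset (Fin q → ℝ)), ∀ i, a i < ρ i)
    (hHI : volume (⋃ a ∈ A, Set.Icc a ρ) <
      volume (⋃ a ∈ (insert y A : Finset (Fin q → ℝ)), Set.Icc a ρ)) :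
    (∀ a ∈ A, ¬((∀ i, a i ≤ y i) ∧ a ≠ y)) ∧
      ∃ ε > (0 : ℝ), ∀ a ∈ A, ∃ ℓ, y ℓ + ε < a ℓ :=
  stmt13_general A ρ y hHI
end

section
/- Suppose H_k = HI(F(X_k)) is nondecreasing and bounded above by H̄, Δ_k ≥ 0, and Φ_k := −H_k + η Δ_k^{2q} with η > 0. Assume at every iteration one of three cases holds: (a) H_{k+1} = H_k and Δ_{k+1} ≤ θΔ_k with θ ∈ (0,1); (b) H_{k+1} − H_k ≥ (γ c² Δ_{k+1}²)^q and Δ_{k+1} ≤ Δ_k; (c) H_{k+1} − H_k ≥ (γ Δ_{k+1}²)^q and Δ_{k+1} > Δ_k. Then, with 0 < η < γ^q, Φ_{k+1} − Φ_k ≤ −c̃ Δ_{k+1}^{2q} where c̃ = min{η(1−θ^{2q})/θ^{2q}, γ^q c^{2q}, γ^q − η}. -/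
/-!
Each of the three cases of an iteration yields its own decrease constant for
`Φ_k = -H_k + η Δ_k^{2q}`, and `c̃` is the smallest of the three. In a contraction step the
hypervolume does not move, but `Δ_k^{2q} ≥ Δ_{k+1}^{2q} / θ^{2q}`, so the stepsize term alone
drops by `η (1 - θ^{2q}) / θ^{2q} · Δ_{k+1}^{2q}`. In the two other steps the hypervolume
gain pays for the decrease; when the stepsize grows, the growth of the stepsize term costs at
most `η Δ_{k+1}^{2q}`, whence the constant `γ^q - η`.
-/

section CostDecrease

variable {η x y h₀ h₁ : ℝ} (n : ℕ)

theorem cost_sub_le_of_stepsize_contraction {θ : ℝ} (hη : 0 ≤ η) (hθ : 0 < θ) (hx : 0 ≤ x)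
    (hh : h₁ = h₀) (hxy : x ≤ θ * y) :
    (-h₁ + η * x ^ n) - (-h₀ + η * y ^ n) ≤ -(η * (1 - θ ^ n) / θ ^ n) * x ^ n := by
  have hθn : 0 < θ ^ n := pow_pos hθ n
  have hpow : x ^ n / θ ^ n ≤ y ^ n := by
    rw [div_le_iff₀' hθn, ← mul_pow]
    exact pow_le_pow_left₀ hx hxy n
  calc (-h₁ + η * x ^ n) - (-h₀ + η * y ^ n) = η * (x ^ n - y ^ n) := by rw [hh]; ring
    _ ≤ η * (x ^ n - x ^ n / θ ^ n) := by gcongr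
    _ = -(η * (1 - θ ^ n) / θ ^ n) * x ^ n := by field_simp; ring

theorem cost_sub_le_of_gain_of_stepsize_le {m : ℝ} (hη : 0 ≤ η) (hx : 0 ≤ x) (hxy : x ≤ y)
    (hgain : m * x ^ n ≤ h₁ - h₀) :
    (-h₁ + η * x ^ n) - (-h₀ + η * y ^ n) ≤ -m * x ^ n := by
  have hpow : x ^ n ≤ y ^ n := pow_le_pow_left₀ hx hxy n
  nlinarith

theorem cost_sub_le_of_gain {m : ℝ} (hη : 0 ≤ η) (hy : 0 ≤ y) (hgain : m * x ^ n ≤ h₁ - h₀) :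
    (-h₁ + η * x ^ n) - (-h₀ + η * y ^ n) ≤ -(m - η) * x ^ n := by
  have : 0 ≤ η * y ^ n := mul_nonneg hη (pow_nonneg hy n)
  linarith

end CostDecrease

theorem le_neg_mul_of_le_neg_mul {d a C m : ℝ} (ha : 0 ≤ a) (hm : m ≤ C) (h : d ≤ -C * a) :
    d ≤ -m * a :=
  h.trans (mul_le_mul_of_nonneg_right (neg_le_neg hm) ha)

theorem stmt17_general (q : ℕ) (θ c γ η : ℝ)
    (hθ : θ ∈ Set.Ioo (0 : ℝ) 1) (hη0 : 0 < η)
    (H Δ : ℕ → ℝ) (hΔ : ∀ k, 0 ≤ Δ k)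
    (hcase : ∀ k,
      (H (k + 1) = H k ∧ Δ (k + 1) ≤ θ * Δ k) ∨
      ((γ * c ^ 2 * (Δ (k + 1)) ^ 2) ^ q ≤ H (k + 1) - H k ∧ Δ (k + 1) ≤ Δ k) ∨
      ((γ * (Δ (k + 1)) ^ 2) ^ q ≤ H (k + 1) - H k ∧ Δ k < Δ (k + 1))) :
    ∀ k, (-H (k + 1) + η * (Δ (k + 1)) ^ (2 * q)) - (-H k + η * (Δ k) ^ (2 * q)) ≤
      -(min (min (η * (1 - θ ^ (2 * q)) / θ ^ (2 * q)) (γ ^ q * c ^ (2 * q))) (γ ^ q - η)) *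
        (Δ (k + 1)) ^ (2 * q) := by
  intro k
  have ha : 0 ≤ Δ (k + 1) ^ (2 * q) := pow_nonneg (hΔ _) _
  rcases hcase k with ⟨hH, hd⟩ | ⟨hH, hd⟩ | ⟨hH, hd⟩
  · exact le_neg_mul_of_le_neg_mul ha ((min_le_left _ _).trans (min_le_left _ _))
      (cost_sub_le_of_stepsize_contraction _ hη0.le hθ.1 (hΔ _) hH hd)
  · rw [mul_pow, mul_pow, ← pow_mul, ← pow_mul] at hH
    exact le_neg_mul_of_le_neg_mul ha ((min_le_left _ _).trans (min_le_right _ _))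
      (cost_sub_le_of_gain_of_stepsize_le _ hη0.le (hΔ _) hd hH)
  · rw [mul_pow, ← pow_mul] at hH
    exact le_neg_mul_of_le_neg_mul ha (min_le_right _ _) (cost_sub_le_of_gain _ hη0.le (hΔ _) hH)

/-- Abstract sufficient decrease of the cost function `Φ_k = -H_k + η Δ_k^{2q}`:
under the three-case hypothesis on the hypervolume increase/stepsize behavior, we get
`Φ_{k+1} - Φ_k ≤ -c̃ Δ_{k+1}^{2q}` with
`c̃ = min{η(1-θ^{2q})/θ^{2q}, γ^q c^{2q}, γ^q - η}`. -/
theorem stmt17 (q : ℕ) (hq : 1 ≤ q) (θ c γ η Hbar : ℝ)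
    (hθ : θ ∈ Set.Ioo (0 : ℝ) 1) (hc : c ∈ Set.Ioo (0 : ℝ) 1)
    (hγ : γ ∈ Set.Ioo (0 : ℝ) 1) (hη0 : 0 < η) (hηγ : η < γ ^ q)
    (H Δ : ℕ → ℝ) (hmono : Monotone H) (hub : ∀ k, H k ≤ Hbar) (hΔ : ∀ k, 0 ≤ Δ k)
    (hcase : ∀ k,
      (H (k + 1) = H k ∧ Δ (k + 1) ≤ θ * Δ k) ∨
      ((γ * c ^ 2 * (Δ (k + 1)) ^ 2) ^ q ≤ H (k + 1) - H k ∧ Δ (k + 1) ≤ Δ k) ∨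
      ((γ * (Δ (k + 1)) ^ 2) ^ q ≤ H (k + 1) - H k ∧ Δ k < Δ (k + 1))) :
    ∀ k, (-H (k + 1) + η * (Δ (k + 1)) ^ (2 * q)) - (-H k + η * (Δ k) ^ (2 * q)) ≤
      -(min (min (η * (1 - θ ^ (2 * q)) / θ ^ (2 * q)) (γ ^ q * c ^ (2 * q))) (γ ^ q - η)) *
        (Δ (k + 1)) ^ (2 * q) :=
  stmt17_general q θ c γ η hθ hη0 H Δ hΔ hcase
end

section
/- In R², consider the bi-objective functions f¹(x) = x² and f²(x) = (x−4)²/18, the points x₀ = 1 and x₁ = 0, and reference point ρ = (49, 25/18). Then the hypervolume of {F(x₀), F(x₁)} with respect to ρ exceeds the hypervolume of {F(x₀)} by exactly 1/2, which is strictly less than (f¹(x₀) − f¹(x₁))² = 1. -/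
open MeasureTheory Set

theorem volume_Icc_union_Icc_add_volume_Icc_sup {ι : Type*} [Fintype ι] (a b ρ : ι → ℝ) :
    volume (Icc a ρ ∪ Icc b ρ) + volume (Icc (a ⊔ b) ρ) = volume (Icc a ρ) + volume (Icc b ρ) := by
  have h := measure_union_add_inter (μ := volume) (Icc a ρ) (measurableSet_Icc (a := b) (b := ρ))
  rwa [Icc_inter_Icc, inf_idem] at h

theorem volume_Icc_fin_two (a b : Fin 2 → ℝ) :
    volume (Icc a b) = ENNReal.ofReal (b 0 - a 0) * ENNReal.ofReal (b 1 - a 1) := by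
  rw [Real.volume_Icc_pi, Fin.prod_univ_two]

/-- By inclusion–exclusion, adding `b` to `{a}` adds exactly the strip `[b 0, a 0] × [b 1, ρ 1]`. -/
theorem volume_Icc_union_Icc_fin_two {a b ρ : Fin 2 → ℝ} (h₀ : b 0 ≤ a 0) (h₁ : a 1 ≤ b 1)
    (ha : a 0 ≤ ρ 0) :
    volume (Icc a ρ ∪ Icc b ρ) =
      volume (Icc a ρ) + ENNReal.ofReal ((a 0 - b 0) * (ρ 1 - b 1)) := by
  have hsup : volume (Icc (a ⊔ b) ρ) = ENNReal.ofReal (ρ 0 - a 0) * ENNReal.ofReal (ρ 1 - b 1) := by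
    rw [volume_Icc_fin_two, Pi.sup_apply, Pi.sup_apply, sup_of_le_left h₀, sup_of_le_right h₁]
  have hb : volume (Icc b ρ) = volume (Icc (a ⊔ b) ρ) + ENNReal.ofReal ((a 0 - b 0) * (ρ 1 - b 1)) := by
    rw [hsup, volume_Icc_fin_two, ENNReal.ofReal_mul (sub_nonneg.2 h₀), ← add_mul,
      ← ENNReal.ofReal_add (sub_nonneg.2 ha) (sub_nonneg.2 h₀), sub_add_sub_cancel]
  have key := volume_Icc_union_Icc_add_volume_Icc_sup a b ρ
  rw [hb, ← add_assoc, add_right_comm] at key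
  refine (ENNReal.add_left_inj ?_).1 key
  rw [hsup]
  exact ENNReal.mul_ne_top ENNReal.ofReal_ne_top ENNReal.ofReal_ne_top

/-- Example of Remark A.1: for `f¹(x) = x²`, `f²(x) = (x-4)²/18`, points `x₀ = 1`, `x₁ = 0`
and reference point `ρ = (49, 25/18)`, the hypervolume of `{F(x₀), F(x₁)}` exceeds that of
`{F(x₀)}` by exactly `1/2`, which is strictly less than `(f¹(x₀) - f¹(x₁))² = 1`. -/
theorem stmt19 (f₁ f₂ : ℝ → ℝ) (hf₁ : ∀ x, f₁ x = x ^ 2)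
    (hf₂ : ∀ x, f₂ x = (x - 4) ^ 2 / 18) :
    volume (Set.Icc ![f₁ 1, f₂ 1] ![(49 : ℝ), 25 / 18] ∪
        Set.Icc ![f₁ 0, f₂ 0] ![(49 : ℝ), 25 / 18]) =
      volume (Set.Icc ![f₁ 1, f₂ 1] ![(49 : ℝ), 25 / 18]) + ENNReal.ofReal (1 / 2) ∧
    (1 / 2 : ℝ) < (f₁ 1 - f₁ 0) ^ 2 := by
  simp only [hf₁, hf₂]
  refine ⟨?_, by norm_num⟩
  rw [volume_Icc_union_Icc_fin_two] <;> norm_num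
end
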